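/- arXiv:2605.20140 — 4 statements merged into one kernel-verified Lean document; each statement's English description precedes it below -/
import Mathlib

section
/- Let D_m > 0, τ > 0, L > 0, β ≥ 0, and let H be a positive integer, and set x := e^{−π² D_m τ H² / L²}. Assume x ≤ 1/100. Then for every q ∈ ℤ³ with |q_i| ≤ H/2 for each i, the aliasing error satisfies Σ_{n ∈ ℤ³, n ≠ 0} exp(−4π²|q + Hn|² D_m τ / L² − βτ) ≤ 7·x. -/
open Real

/-! Since `|qᵢ| ≤ H/2`, `|qᵢ + H nᵢ| ≥ H (|nᵢ| - 1/2)`, hence `4 (qᵢ + H nᵢ)² ≥ H² |nᵢ|` and the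
alias `n` is at most `∏ᵢ x ^ |nᵢ|`. Summed over all of `ℤ³` this product gives
`((1 + x) / (1 - x))³`; dropping `n = 0` leaves `((1 + x) / (1 - x))³ - 1 ≤ 7 x` for `x ≤ 1/100`. -/

theorem hasSum_pow_natAbs {x : ℝ} (hx0 : 0 ≤ x) (hx1 : x < 1) :
    HasSum (fun m : ℤ => x ^ m.natAbs) ((1 + x) / (1 - x)) := by
  have hpos : HasSum (fun n : ℕ => x ^ n) (1 - x)⁻¹ := hasSum_geometric_of_lt_one hx0 hx1
  have hneg : HasSum (fun n : ℕ => x ^ (n + 1)) (x * (1 - x)⁻¹) := by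
    simpa only [pow_succ'] using hpos.mul_left x
  convert HasSum.of_nat_of_neg_add_one (f := fun m : ℤ => x ^ m.natAbs) hpos hneg using 1
  field_simp [(sub_pos.2 hx1).ne']

theorem HasSum.subtype_ne {β : Type*} {f : β → ℝ} {a : ℝ} (hf : HasSum f a) (b : β) :
    HasSum (fun n : {n // n ≠ b} => f n) (a - f b) :=
  (hasSum_singleton b f).hasSum_iff_compl.1 hf

theorem HasSum.pi_fin_prod_of_nonneg {β : Type*} {f : β → ℝ} {a : ℝ} (hf : HasSum f a)
    (hf0 : 0 ≤ f) (d : ℕ) : HasSum (fun n : Fin d → β => ∏ i, f (n i)) (a ^ d) := by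
  induction d with
  | zero => simp
  | succ d ih =>
    have ih0 : 0 ≤ fun n : Fin d → β => ∏ i, f (n i) :=
      fun n => Finset.prod_nonneg fun i _ => hf0 (n i)
    have hsummable := hf.summable.mul_of_nonneg ih.summable hf0 ih0
    have hcons : (fun n : Fin (d + 1) → β => ∏ i, f (n i)) ∘ Fin.consEquiv (fun _ => β) =
        fun p => f p.1 * ∏ i, f (p.2 i) := by
      funext p
      simp [Fin.prod_univ_succ]
    have hprod := hf.mul ih hsummable
    rw [pow_succ', ← (Fin.consEquiv fun _ => β).hasSum_iff, hcons]
    exact hprod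

theorem natAbs_mul_sq_le_four_mul_sq {h t : ℝ} (hh : 0 ≤ h) (ht : |t| ≤ h / 2) (m : ℤ) :
    m.natAbs * h ^ 2 ≤ 4 * (t + h * m) ^ 2 := by
  rcases eq_or_ne m 0 with rfl | hm
  · simp only [Int.natAbs_zero, Nat.cast_zero, zero_mul]; positivity
  rw [Nat.cast_natAbs, Int.cast_abs]
  have hm1 : (1 : ℝ) ≤ |(m : ℝ)| := by exact_mod_cast Int.one_le_abs hm
  have hlow : h * |(m : ℝ)| - h / 2 ≤ |t + h * m| := by
    have := abs_sub_abs_le_abs_sub (h * m) (-t)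
    rw [abs_neg, abs_mul, abs_of_nonneg hh, sub_neg_eq_add, add_comm] at this
    linarith
  have hsq : (h * |(m : ℝ)| - h / 2) ^ 2 ≤ (t + h * m) ^ 2 := by
    rw [← sq_abs (t + h * m)]
    exact pow_le_pow_left₀ (by nlinarith) hlow 2
  -- `(2a - 1)² - a = (a - 1) (4a - 1) ≥ 0` for `a = |m| ≥ 1`
  nlinarith [mul_nonneg (mul_nonneg (sub_nonneg.2 hm1) (by linarith : (0:ℝ) ≤ 4 * |(m:ℝ)| - 1))
    (sq_nonneg h)]

theorem exp_neg_four_mul_sq_le_pow_natAbs {c h t : ℝ} (hc : 0 ≤ c) (hh : 0 ≤ h)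
    (ht : |t| ≤ h / 2) (m : ℤ) :
    exp (-(4 * c * (t + h * m) ^ 2)) ≤ exp (-(c * h ^ 2)) ^ m.natAbs := by
  rw [← exp_nat_mul, exp_le_exp]
  nlinarith [mul_le_mul_of_nonneg_left (natAbs_mul_sq_le_four_mul_sq hh ht m) hc]

theorem exp_neg_four_mul_sum_sq_le_prod_pow_natAbs {ι : Type*} [Fintype ι] {c h : ℝ}
    (hc : 0 ≤ c) (hh : 0 ≤ h) {t : ι → ℝ} (ht : ∀ i, |t i| ≤ h / 2) (n : ι → ℤ) :
    exp (-(4 * c * ∑ i, (t i + h * n i) ^ 2)) ≤ ∏ i, exp (-(c * h ^ 2)) ^ (n i).natAbs := by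
  rw [Finset.mul_sum, ← Finset.sum_neg_distrib, exp_sum]
  exact Finset.prod_le_prod (fun i _ => (exp_pos _).le)
    fun i _ => exp_neg_four_mul_sq_le_pow_natAbs hc hh (ht i) (n i)

theorem one_add_div_one_sub_pow_three_sub_one_le {x : ℝ} (hx0 : 0 ≤ x) (hx : x ≤ 1 / 100) :
    ((1 + x) / (1 - x)) ^ 3 - 1 ≤ 7 * x := by
  have h1x : 0 < 1 - x := by linarith
  rw [div_pow, div_sub_one (by positivity), div_le_iff₀ (by positivity)]
  nlinarith [mul_le_mul_of_nonneg_left hx hx0, mul_nonneg (mul_nonneg hx0 hx0) hx0,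
    mul_le_mul_of_nonneg_left (mul_le_mul_of_nonneg_left hx hx0) hx0]

theorem stmt_4_general (Dm τ L β : ℝ) (hDm : 0 < Dm) (hτ : 0 < τ) (hβ : 0 ≤ β)
    (H : ℕ)
    (x : ℝ) (hx : x = Real.exp (-(π ^ 2) * Dm * τ * (H : ℝ) ^ 2 / L ^ 2))
    (hsmall : x ≤ 1 / 100) :
    ∀ q : Fin 3 → ℤ, (∀ i, |(q i : ℝ)| ≤ (H : ℝ) / 2) →
      (∑' n : {n : Fin 3 → ℤ // n ≠ 0},
          Real.exp (-(4 * π ^ 2 * (∑ i, ((q i : ℝ) + (H : ℝ) * ((n : Fin 3 → ℤ) i : ℝ)) ^ 2))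
            * Dm * τ / L ^ 2 - β * τ)) ≤ 7 * x := by
  intro q hq
  set c := π ^ 2 * Dm * τ / L ^ 2 with hc_def
  have hc : 0 ≤ c := by positivity
  have hxc : x = exp (-(c * (H : ℝ) ^ 2)) := by rw [hx, hc_def]; ring_nf
  have hx0 : 0 ≤ x := hx ▸ (exp_pos _).le
  have hterm : ∀ n : Fin 3 → ℤ,
      exp (-(4 * π ^ 2 * (∑ i, ((q i : ℝ) + (H : ℝ) * (n i : ℝ)) ^ 2)) * Dm * τ / L ^ 2 - β * τ)
        ≤ ∏ i, x ^ (n i).natAbs := fun n => calc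
    _ = exp (-(4 * c * ∑ i, ((q i : ℝ) + H * n i) ^ 2) - β * τ) := by
      rw [hc_def]
      congr 1
      ring
    _ ≤ exp (-(4 * c * ∑ i, ((q i : ℝ) + H * n i) ^ 2)) :=
      exp_le_exp.2 (sub_le_self _ (mul_nonneg hβ hτ.le))
    _ ≤ ∏ i, x ^ (n i).natAbs :=
      hxc ▸ exp_neg_four_mul_sum_sq_le_prod_pow_natAbs hc (Nat.cast_nonneg H) hq n
  have hsum := ((hasSum_pow_natAbs hx0 (by linarith)).pi_fin_prod_of_nonneg
    (fun m => pow_nonneg hx0 _) 3).subtype_ne 0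
  simp only [Pi.zero_apply, Int.natAbs_zero, pow_zero, Finset.prod_const_one] at hsum
  refine le_trans (Summable.tsum_le_tsum (fun n => hterm n.1) ?_ hsum.summable) ?_
  · exact hsum.summable.of_nonneg_of_le (fun _ => (exp_pos _).le) fun n => hterm n.1
  · exact hsum.tsum_eq.trans_le (one_add_div_one_sub_pow_three_sub_one_le hx0 hsmall)

/-- Quantitative aliasing-error bound (Lemma 2.2): with
`x = exp(−π² D_m τ H²/L²) ≤ 1/100`, for each frequency `q ∈ U_H` the sum of the
non-principal aliases of the heat kernel is at most `7·x`. -/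
theorem stmt_4 (Dm τ L β : ℝ) (hDm : 0 < Dm) (hτ : 0 < τ) (hL : 0 < L) (hβ : 0 ≤ β)
    (H : ℕ) (hH : 0 < H)
    (x : ℝ) (hx : x = Real.exp (-(π ^ 2) * Dm * τ * (H : ℝ) ^ 2 / L ^ 2))
    (hsmall : x ≤ 1 / 100) :
    ∀ q : Fin 3 → ℤ, (∀ i, |(q i : ℝ)| ≤ (H : ℝ) / 2) →
      (∑' n : {n : Fin 3 → ℤ // n ≠ 0},
          Real.exp (-(4 * π ^ 2 * (∑ i, ((q i : ℝ) + (H : ℝ) * ((n : Fin 3 → ℤ) i : ℝ)) ^ 2))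
            * Dm * τ / L ^ 2 - β * τ)) ≤ 7 * x :=
  stmt_4_general Dm τ L β hDm hτ hβ H x hx hsmall
end

section
/- For every real c > 0 and every x ∈ ℝ, the absolutely convergent series Σ_{m∈ℤ} e^{−c·m²} · cos(2π·m·x) is strictly positive. -/
/-!
By Poisson summation (the theta transformation formula) the cosine series equals
`√(π / c) * ∑ₙ exp (-(π² / c) (n - x)²)`, the periodization of a Gaussian, which is a sum of
positive terms.
-/

open Real

lemma summable_exp_neg_mul_sq_sub {a : ℝ} (ha : 0 < a) (x : ℝ) :
    Summable fun n : ℤ ↦ rexp (-a * (n - x) ^ 2) := by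
  -- `‖jacobiTheta₂_term n z τ‖` is, up to a constant factor, a Gaussian in `n` centred at
  -- `-im z / im τ`
  have hθ : Summable (jacobiTheta₂_term · (-Complex.I * (a * x / π)) (Complex.I * (a / π))) :=
    (summable_jacobiTheta₂_term_iff _ _).mpr (by simpa using div_pos ha pi_pos)
  refine (hθ.norm.mul_left (rexp (-a * x ^ 2))).congr fun n ↦ ?_
  rw [norm_jacobiTheta₂_term, ← Real.exp_add]
  congr 1
  simp only [Complex.mul_im, Complex.neg_re, Complex.neg_im, Complex.I_re, Complex.I_im,
    ← Complex.ofReal_mul, Complex.div_ofReal_re, Complex.div_ofReal_im, Complex.ofReal_re,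
    Complex.ofReal_im]
  field_simp
  ring

lemma tsum_exp_neg_mul_sq_mul_cos {c : ℝ} (hc : 0 < c) (x : ℝ) :
    ∑' m : ℤ, rexp (-c * m ^ 2) * cos (2 * π * m * x) =
      √(π / c) * ∑' n : ℤ, rexp (-(π ^ 2 / c) * (n - x) ^ 2) := by
  have hcπ : 0 < c / π := div_pos hc pi_pos
  have poisson := Complex.tsum_exp_neg_quadratic (a := (c / π : ℝ)) (by simpa using hcπ)
    (Complex.I * x)
  have hlhs : ∀ n : ℤ, Complex.exp (-π * (c / π : ℝ) * n ^ 2 + 2 * π * (Complex.I * x) * n) =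
      rexp (-c * n ^ 2) * Complex.exp ((2 * π * n * x : ℝ) * Complex.I) := by
    intro n
    rw [Complex.ofReal_exp, ← Complex.exp_add]
    congr 1
    push_cast
    field_simp
  have hrhs : ∀ n : ℤ, Complex.exp (-π / (c / π : ℝ) * (n + Complex.I * (Complex.I * x)) ^ 2) =
      rexp (-(π ^ 2 / c) * (n - x) ^ 2) := by
    intro n
    rw [Complex.ofReal_exp, ← mul_assoc, Complex.I_mul_I, neg_one_mul, ← sub_eq_add_neg]
    congr 1
    push_cast
    field_simp
  have hsqrt : ((c / π : ℝ) : ℂ) ^ (1 / 2 : ℂ) = √(c / π) := by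
    rw [Real.sqrt_eq_rpow, Complex.ofReal_cpow hcπ.le]
    norm_num
  have hsum : Summable fun n : ℤ ↦
      (rexp (-c * n ^ 2) : ℂ) * Complex.exp ((2 * π * n * x : ℝ) * Complex.I) := by
    refine Summable.of_norm ((summable_exp_neg_mul_sq_sub hc 0).congr fun n ↦ ?_)
    rw [norm_mul, Complex.norm_exp_ofReal_mul_I, Complex.norm_real,
      Real.norm_of_nonneg (exp_pos _).le, sub_zero, mul_one]
  rw [tsum_congr hlhs, tsum_congr hrhs, hsqrt, ← Complex.ofReal_tsum, ← Complex.ofReal_one,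
    ← Complex.ofReal_div, ← Complex.ofReal_mul] at poisson
  have hre := congrArg Complex.re poisson
  simpa only [Complex.re_tsum hsum, Complex.re_ofReal_mul, Complex.exp_ofReal_mul_I_re,
    Complex.ofReal_re, one_div, ← Real.sqrt_inv, inv_div] using hre

/-- Positivity of the periodized Gaussian (theta-type sum): for every `c > 0` and
`x ∈ ℝ`, `Σ_{m∈ℤ} e^{−c m²} cos(2πmx) > 0`. -/
theorem stmt_6 (c : ℝ) (hc : 0 < c) (x : ℝ) :
    0 < ∑' m : ℤ, Real.exp (-c * (m : ℝ) ^ 2) * Real.cos (2 * π * (m : ℝ) * x) := by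
  rw [tsum_exp_neg_mul_sq_mul_cos hc x]
  have hperiodized : 0 < ∑' n : ℤ, rexp (-(π ^ 2 / c) * (n - x) ^ 2) :=
    (summable_exp_neg_mul_sq_sub (by positivity) x).tsum_pos (fun _ ↦ (exp_pos _).le) 0
      (exp_pos _)
  have hsqrt : 0 < √(π / c) := Real.sqrt_pos.mpr (div_pos pi_pos hc)
  positivity
end

section
/- Let α > 0, γ > 0, β ≥ 0, D_m > 0, D_w > 0, and let 0 < τ ≤ 1/2. Let u, v, m, w ≥ 0 be real numbers and x ∈ ℝ³. Then all three components of the reaction step are nonnegative: (i) v·(1 + α·τ·m)^{−1} ≥ 0; (ii) (4π D_m τ)^{−3/2} · e^{−|x|²/(2 D_m τ) − βτ} · (m + τ·u) ≥ 0; (iii) (4π D_w τ)^{−3/2} · e^{−|x|²/(2 D_w τ) − τ} · (w + τ·γ·v − τ·(2u/(1+u))·w) ≥ 0. -/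
open Real

/-- Lemma 2.3 (positivity of the reaction half-step): for `0 < τ ≤ 1/2` and
nonnegative `u, v, m, w`, all three components of the reaction step are nonnegative. -/
theorem stmt_7 (α γ β Dm Dw τ : ℝ) (hα : 0 < α) (hγ : 0 < γ) (hβ : 0 ≤ β)
    (hDm : 0 < Dm) (hDw : 0 < Dw) (hτ0 : 0 < τ) (hτ : τ ≤ 1 / 2)
    (u v m w : ℝ) (hu : 0 ≤ u) (hv : 0 ≤ v) (hm : 0 ≤ m) (hw : 0 ≤ w)
    (x : EuclideanSpace ℝ (Fin 3)) :
    0 ≤ v * (1 + α * τ * m)⁻¹ ∧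
    0 ≤ (4 * π * Dm * τ) ^ (-(3 : ℝ) / 2) *
        Real.exp (-‖x‖ ^ 2 / (2 * Dm * τ) - β * τ) * (m + τ * u) ∧
    0 ≤ (4 * π * Dw * τ) ^ (-(3 : ℝ) / 2) *
        Real.exp (-‖x‖ ^ 2 / (2 * Dw * τ) - τ) *
        (w + τ * γ * v - τ * (2 * u / (1 + u)) * w) := by
  have hπ := Real.pi_pos
  refine ⟨?_, ?_, ?_⟩
  · exact mul_nonneg hv (inv_nonneg.mpr (by nlinarith [mul_nonneg (mul_nonneg hα.le hτ0.le) hm]))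
  · exact mul_nonneg (mul_nonneg (Real.rpow_nonneg (by positivity) _) (Real.exp_pos _).le)
      (by nlinarith)
  · refine mul_nonneg (mul_nonneg (Real.rpow_nonneg (by positivity) _) (Real.exp_pos _).le) ?_
    have h1u : (0:ℝ) < 1 + u := by linarith
    have hη : 2 * u / (1 + u) ≤ 2 := by
      rw [div_le_iff₀ h1u]; linarith
    have hη0 : 0 ≤ 2 * u / (1 + u) := by positivity
    have : τ * (2 * u / (1 + u)) * w ≤ w := by
      have : τ * (2 * u / (1 + u)) ≤ 1 := by nlinarith
      nlinarith
    nlinarith [mul_nonneg (mul_nonneg hτ0.le hγ.le) hv]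
end

section
/- For ε > 0 let K_ε : ℝ³ → ℝ be the density of the normal distribution N(0, ε·I₃), i.e. K_ε(x) = (2πε)^{−3/2}·exp(−|x|²/(2ε)). Let P be a positive integer and for each p ∈ {1,…,P} let â_p ≥ 0, ã_p ≥ 0 be weights and X̂_p, X̃_p ∈ ℝ³ be points. Then ∫_{ℝ³} | Σ_{p=1}^{P} ( â_p·K_ε(x − X̂_p) − ã_p·K_ε(x − X̃_p) ) | dx ≤ Σ_{p=1}^{P} |â_p − ã_p| + 4·max(ε^{−1/2}, 1)·Σ_{p=1}^{P} ã_p·|X̂_p − X̃_p|. -/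
/-!
Split each term as `(â - ã) K(x - X̂) + ã (K(x - X̂) - K(x - X̃))`: the first part contributes
`|â - ã|` because `K` has mass one, and by translation invariance the second reduces to the
`L¹` modulus of continuity `∫ |K(x - v) - K(x)|` of the kernel. For the Gaussian,
`|e^{-A} - e^{-B}| ≤ |A - B| (e^{-A} + e^{-B})` bounds it by `‖v‖ (2 m + ‖v‖) / ε`, where
`m = 2 √(2ε/π) ≤ (7/4) √ε` is the first absolute moment of `N(0, ε I₃)`, computed in polar
coordinates. This gives `4 ‖v‖ / √ε` when `‖v‖ ≤ √ε / 2`; for larger shifts the trivial bound `2`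
suffices.
-/

open Real MeasureTheory Module Set Metric

section Translates

variable {G : Type*} [NormedAddCommGroup G] [MeasurableSpace G] [BorelSpace G] {μ : Measure G}
  [μ.IsAddRightInvariant] {g : G → ℝ}

theorem integral_abs_comp_sub_sub_le_two (hg : Integrable g μ) (hg0 : 0 ≤ g)
    (hg1 : ∫ x, g x ∂μ = 1) (v : G) : ∫ x, |g (x - v) - g x| ∂μ ≤ 2 := by
  calc ∫ x, |g (x - v) - g x| ∂μ ≤ ∫ x, (g (x - v) + g x) ∂μ := by
        refine integral_mono ((hg.comp_sub_right v).sub hg).abs ((hg.comp_sub_right v).add hg)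
          fun x => ?_
        simpa only [abs_of_nonneg (hg0 _)] using abs_sub (g (x - v)) (g x)
    _ = 2 := by
        rw [integral_add (hg.comp_sub_right v) hg, integral_sub_right_eq_self g v, hg1]
        norm_num

variable {L : ℝ}

theorem integral_abs_mul_comp_sub_sub_le (hg : Integrable g μ) (hg0 : 0 ≤ g)
    (hg1 : ∫ x, g x ∂μ = 1) (hL : ∀ v, ∫ x, |g (x - v) - g x| ∂μ ≤ L * ‖v‖)
    (a : ℝ) {b : ℝ} (hb : 0 ≤ b) (X Y : G) :
    ∫ x, |a * g (x - X) - b * g (x - Y)| ∂μ ≤ |a - b| + L * (b * ‖X - Y‖) := by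
  have hX := hg.comp_sub_right (μ := μ) X
  have hdiff : Integrable (fun x => |g (x - X) - g (x - Y)|) μ :=
    (hX.sub (hg.comp_sub_right Y)).abs
  have hshift : ∫ x, |g (x - X) - g (x - Y)| ∂μ = ∫ x, |g (x - (X - Y)) - g x| ∂μ := by
    rw [← integral_add_right_eq_self (fun x => |g (x - X) - g (x - Y)|) Y]
    simp only [add_sub_cancel_right, sub_sub_eq_add_sub]
  calc ∫ x, |a * g (x - X) - b * g (x - Y)| ∂μ
      ≤ ∫ x, (|a - b| * g (x - X) + b * |g (x - X) - g (x - Y)|) ∂μ := by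
        refine integral_mono ((hX.const_mul a).sub ((hg.comp_sub_right Y).const_mul b)).abs
          ((hX.const_mul _).add (hdiff.const_mul _)) fun x => ?_
        calc |a * g (x - X) - b * g (x - Y)|
            = |(a - b) * g (x - X) + b * (g (x - X) - g (x - Y))| := by congr 1; ring
          _ ≤ _ := by
            refine (abs_add_le _ _).trans_eq ?_
            rw [abs_mul, abs_mul, abs_of_nonneg (hg0 _), abs_of_nonneg hb]
    _ = |a - b| + b * ∫ x, |g (x - (X - Y)) - g x| ∂μ := by
        rw [integral_add (hX.const_mul _) (hdiff.const_mul _), integral_const_mul,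
          integral_const_mul, integral_sub_right_eq_self g X, hg1, mul_one, hshift]
    _ ≤ |a - b| + L * (b * ‖X - Y‖) := by
        have := mul_le_mul_of_nonneg_left (hL (X - Y)) hb
        linarith

theorem integral_abs_sum_mul_comp_sub_sub_le {ι : Type*} (s : Finset ι) (hg : Integrable g μ)
    (hg0 : 0 ≤ g) (hg1 : ∫ x, g x ∂μ = 1) (hL : ∀ v, ∫ x, |g (x - v) - g x| ∂μ ≤ L * ‖v‖)
    (a b : ι → ℝ) (hb : ∀ i, 0 ≤ b i) (X Y : ι → G) :
    ∫ x, |∑ i ∈ s, (a i * g (x - X i) - b i * g (x - Y i))| ∂μ ≤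
      ∑ i ∈ s, |a i - b i| + L * ∑ i ∈ s, b i * ‖X i - Y i‖ := by
  have hterm : ∀ i, Integrable (fun x => a i * g (x - X i) - b i * g (x - Y i)) μ := fun i =>
    ((hg.comp_sub_right (X i)).const_mul _).sub ((hg.comp_sub_right (Y i)).const_mul _)
  calc ∫ x, |∑ i ∈ s, (a i * g (x - X i) - b i * g (x - Y i))| ∂μ
      ≤ ∫ x, ∑ i ∈ s, |a i * g (x - X i) - b i * g (x - Y i)| ∂μ :=
        integral_mono (integrable_finsetSum s fun i _ => hterm i).abs
          (integrable_finsetSum s fun i _ => (hterm i).abs) fun x =>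
          Finset.abs_sum_le_sum_abs _ _
    _ = ∑ i ∈ s, ∫ x, |a i * g (x - X i) - b i * g (x - Y i)| ∂μ :=
        integral_finsetSum s fun i _ => (hterm i).abs
    _ ≤ ∑ i ∈ s, (|a i - b i| + L * (b i * ‖X i - Y i‖)) :=
        Finset.sum_le_sum fun i _ =>
          integral_abs_mul_comp_sub_sub_le hg hg0 hg1 hL (a i) (hb i) (X i) (Y i)
    _ = ∑ i ∈ s, |a i - b i| + L * ∑ i ∈ s, b i * ‖X i - Y i‖ := by
        rw [Finset.sum_add_distrib, Finset.mul_sum]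

end Translates

theorem abs_exp_neg_sub_exp_neg_le (A B : ℝ) :
    |exp (-A) - exp (-B)| ≤ |A - B| * (exp (-A) + exp (-B)) := by
  have key : ∀ A B : ℝ, exp (-A) - exp (-B) ≤ |A - B| * (exp (-A) + exp (-B)) := by
    intro A B
    have h := mul_le_mul_of_nonneg_right (add_one_le_exp (A - B)) (exp_pos (-A)).le
    rw [← exp_add, show A - B + -A = -B by ring] at h
    nlinarith [neg_abs_le (A - B), abs_nonneg (A - B), exp_pos (-A), exp_pos (-B)]
  rw [abs_le]
  constructor
  · have := key B A
    rw [abs_sub_comm] at this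
    linarith
  · exact key A B

section Radial

variable {E : Type*} [NormedAddCommGroup E] [InnerProductSpace ℝ E] [FiniteDimensional ℝ E]
  [MeasurableSpace E] [BorelSpace E] [Nontrivial E] {b : ℝ}

theorem integrable_pow_norm_mul_exp_neg_mul_sq_norm (hb : 0 < b) (k : ℕ) :
    Integrable fun x : E => ‖x‖ ^ k * exp (-b * ‖x‖ ^ 2) := by
  rw [integrable_fun_norm_addHaar volume (f := fun r => r ^ k * exp (-b * r ^ 2))]
  refine (integrableOn_rpow_mul_exp_neg_mul_sq hb (s := (finrank ℝ E - 1 + k : ℕ))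
    (neg_one_lt_zero.trans_le (Nat.cast_nonneg _))).congr_fun (fun y _ => ?_) measurableSet_Ioi
  simp only [smul_eq_mul, rpow_natCast, pow_add]
  ring

theorem integral_pow_norm_mul_exp_neg_mul_sq_norm (hb : 0 < b) (k : ℕ) :
    ∫ x : E, ‖x‖ ^ k * exp (-b * ‖x‖ ^ 2) =
      finrank ℝ E * volume.real (ball (0 : E) 1) *
        (b ^ (-(finrank ℝ E + k : ℝ) / 2) / 2 * Gamma ((finrank ℝ E + k) / 2)) := by
  have hn : 1 ≤ finrank ℝ E := finrank_pos
  have hq : ((finrank ℝ E - 1 + k : ℕ) : ℝ) + 1 = finrank ℝ E + k := by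
    push_cast [hn]; ring
  have radial : ∫ y in Ioi (0 : ℝ), y ^ (finrank ℝ E - 1) • (y ^ k * exp (-b * y ^ 2)) =
      ∫ y in Ioi (0 : ℝ), y ^ ((finrank ℝ E - 1 + k : ℕ) : ℝ) * exp (-b * y ^ (2 : ℝ)) := by
    refine setIntegral_congr_fun measurableSet_Ioi fun y _ => ?_
    simp only [smul_eq_mul, rpow_natCast, rpow_two, pow_add]
    ring
  rw [integral_fun_norm_addHaar volume (fun r => r ^ k * exp (-b * r ^ 2)), nsmul_eq_mul,
    smul_eq_mul, radial, integral_rpow_mul_exp_neg_mul_rpow two_pos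
    (neg_one_lt_zero.trans_le (Nat.cast_nonneg _)) hb, hq]
  ring

theorem integral_norm_mul_exp_neg_mul_sq_norm (hb : 0 < b) :
    ∫ x : E, ‖x‖ * exp (-b * ‖x‖ ^ 2) =
      Gamma ((finrank ℝ E + 1) / 2) / Gamma (finrank ℝ E / 2) / √b *
        ∫ x : E, exp (-b * ‖x‖ ^ 2) := by
  have h1 := integral_pow_norm_mul_exp_neg_mul_sq_norm (E := E) hb 1
  have h0 := integral_pow_norm_mul_exp_neg_mul_sq_norm (E := E) hb 0
  simp only [pow_one, pow_zero, one_mul, Nat.cast_one, Nat.cast_zero, add_zero] at h1 h0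
  have hn : 0 < finrank ℝ E := finrank_pos
  have hΓ : 0 < Gamma (finrank ℝ E / 2) := Gamma_pos_of_pos (by positivity)
  have hpow : b ^ (-(finrank ℝ E + 1 : ℝ) / 2) = b ^ (-(finrank ℝ E : ℝ) / 2) / √b := by
    rw [sqrt_eq_rpow, ← rpow_sub hb]; ring_nf
  rw [h1, h0, hpow]
  field_simp

end Radial

section GaussianKernel

variable {E : Type*} [NormedAddCommGroup E] [InnerProductSpace ℝ E]

noncomputable def gaussianKernel (ε : ℝ) (x : E) : ℝ :=
  (2 * π * ε) ^ (-(finrank ℝ E : ℝ) / 2) * exp (-‖x‖ ^ 2 / (2 * ε))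

variable {ε : ℝ}

theorem gaussianKernel_eq_mul_exp_neg_mul_sq_norm (x : E) :
    gaussianKernel ε x = (2 * π * ε) ^ (-(finrank ℝ E : ℝ) / 2) * exp (-(2 * ε)⁻¹ * ‖x‖ ^ 2) := by
  simp only [gaussianKernel]
  ring_nf

theorem gaussianKernel_nonneg (hε : 0 < ε) (x : E) : 0 ≤ gaussianKernel ε x := by
  unfold gaussianKernel; positivity

theorem abs_gaussianKernel_sub_le (hε : 0 < ε) (x y : E) :
    |gaussianKernel ε x - gaussianKernel ε y| ≤ ‖x - y‖ / (2 * ε) *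
      ((2 * ‖x‖ + ‖x - y‖) * gaussianKernel ε x + (2 * ‖y‖ + ‖x - y‖) * gaussianKernel ε y) := by
  set C := (2 * π * ε) ^ (-(finrank ℝ E : ℝ) / 2)
  have hC : 0 ≤ C := by positivity
  have hK : ∀ z : E, gaussianKernel ε z = C * exp (-(‖z‖ ^ 2 / (2 * ε))) := fun z => by
    rw [gaussianKernel, neg_div (2 * ε)]
  have hdiff : |‖x‖ ^ 2 / (2 * ε) - ‖y‖ ^ 2 / (2 * ε)| ≤ ‖x - y‖ / (2 * ε) * (‖x‖ + ‖y‖) := by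
    have h : |‖x‖ ^ 2 - ‖y‖ ^ 2| ≤ ‖x - y‖ * (‖x‖ + ‖y‖) := by
      rw [sq_sub_sq, abs_mul, abs_of_nonneg (by positivity : 0 ≤ ‖x‖ + ‖y‖), mul_comm]
      gcongr
      exact abs_norm_sub_norm_le x y
    rw [← sub_div, abs_div, abs_of_pos (by positivity : (0 : ℝ) < 2 * ε), div_mul_eq_mul_div]
    gcongr
  have hx : ‖x‖ + ‖y‖ ≤ 2 * ‖x‖ + ‖x - y‖ := by
    linarith [norm_le_norm_add_norm_sub' y x, norm_sub_rev x y]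
  have hy : ‖x‖ + ‖y‖ ≤ 2 * ‖y‖ + ‖x - y‖ := by linarith [norm_le_norm_add_norm_sub' x y]
  rw [hK, hK, ← mul_sub, abs_mul, abs_of_nonneg hC]
  calc C * |exp (-(‖x‖ ^ 2 / (2 * ε))) - exp (-(‖y‖ ^ 2 / (2 * ε)))|
      ≤ C * (‖x - y‖ / (2 * ε) * (‖x‖ + ‖y‖) *
          (exp (-(‖x‖ ^ 2 / (2 * ε))) + exp (-(‖y‖ ^ 2 / (2 * ε))))) := by
        gcongr
        exact (abs_exp_neg_sub_exp_neg_le _ _).trans (by gcongr)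
    _ = ‖x - y‖ / (2 * ε) * ((‖x‖ + ‖y‖) * (C * exp (-(‖x‖ ^ 2 / (2 * ε)))) +
          (‖x‖ + ‖y‖) * (C * exp (-(‖y‖ ^ 2 / (2 * ε))))) := by ring
    _ ≤ _ := by gcongr

variable [FiniteDimensional ℝ E] [MeasurableSpace E] [BorelSpace E]

theorem integral_gaussianKernel (hε : 0 < ε) : ∫ x : E, gaussianKernel ε x = 1 := by
  simp_rw [gaussianKernel_eq_mul_exp_neg_mul_sq_norm]
  rw [integral_const_mul, GaussianFourier.integral_rexp_neg_mul_sq_norm (by positivity),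
    show π / (2 * ε)⁻¹ = 2 * π * ε by field_simp, ← rpow_add (by positivity), neg_div,
    neg_add_cancel, rpow_zero]

theorem integrable_gaussianKernel [Nontrivial E] (hε : 0 < ε) :
    Integrable (gaussianKernel ε : E → ℝ) := by
  have h := (integrable_pow_norm_mul_exp_neg_mul_sq_norm (E := E)
    (by positivity : 0 < (2 * ε)⁻¹) 0).const_mul ((2 * π * ε) ^ (-(finrank ℝ E : ℝ) / 2))
  simpa only [pow_zero, one_mul, ← gaussianKernel_eq_mul_exp_neg_mul_sq_norm] using h

theorem integrable_norm_mul_gaussianKernel [Nontrivial E] (hε : 0 < ε) :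
    Integrable fun x : E => ‖x‖ * gaussianKernel ε x := by
  simp_rw [gaussianKernel_eq_mul_exp_neg_mul_sq_norm, mul_left_comm ‖_‖]
  simpa only [pow_one] using (integrable_pow_norm_mul_exp_neg_mul_sq_norm (E := E)
    (by positivity : 0 < (2 * ε)⁻¹) 1).const_mul _

theorem integral_norm_mul_gaussianKernel [Nontrivial E] (hε : 0 < ε) :
    ∫ x : E, ‖x‖ * gaussianKernel ε x =
      Gamma ((finrank ℝ E + 1) / 2) / Gamma (finrank ℝ E / 2) * √(2 * ε) := by
  have h := integral_gaussianKernel (E := E) hε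
  simp_rw [gaussianKernel_eq_mul_exp_neg_mul_sq_norm, mul_left_comm ‖_‖] at h ⊢
  rw [integral_const_mul, integral_norm_mul_exp_neg_mul_sq_norm (by positivity), mul_left_comm,
    ← integral_const_mul, h, sqrt_inv]
  field_simp

theorem integral_abs_gaussianKernel_sub_le [Nontrivial E] (hε : 0 < ε) (v : E) :
    ∫ x, |gaussianKernel ε (x - v) - gaussianKernel ε x| ≤
      ‖v‖ * (2 * (∫ x : E, ‖x‖ * gaussianKernel ε x) + ‖v‖) / ε := by
  set φ : E → ℝ := fun y => (2 * ‖y‖ + ‖v‖) * gaussianKernel ε y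
  have hφ : Integrable φ := by
    refine (((integrable_norm_mul_gaussianKernel hε).const_mul 2).add
      ((integrable_gaussianKernel hε).const_mul ‖v‖)).congr (.of_forall fun y => ?_)
    simp only [φ, Pi.add_apply]; ring
  have hφ_integral : ∫ y, φ y = 2 * (∫ x : E, ‖x‖ * gaussianKernel ε x) + ‖v‖ := by
    simp only [φ, add_mul, mul_assoc]
    rw [integral_add ((integrable_norm_mul_gaussianKernel hε).const_mul 2)
      ((integrable_gaussianKernel hε).const_mul ‖v‖), integral_const_mul, integral_const_mul,
      integral_gaussianKernel hε, mul_one]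
  have hK := integrable_gaussianKernel (E := E) hε
  calc ∫ x, |gaussianKernel ε (x - v) - gaussianKernel ε x|
      ≤ ∫ x, ‖v‖ / (2 * ε) * (φ (x - v) + φ x) := by
        refine integral_mono ((hK.comp_sub_right v).sub hK).abs
          (((hφ.comp_sub_right v).add hφ).const_mul _) fun x => ?_
        simpa [φ] using abs_gaussianKernel_sub_le hε (x - v) x
    _ = ‖v‖ * (2 * (∫ x : E, ‖x‖ * gaussianKernel ε x) + ‖v‖) / ε := by
        rw [integral_const_mul, integral_add (hφ.comp_sub_right v) hφ,
          integral_sub_right_eq_self φ v, hφ_integral]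
        field_simp
        ring

theorem integral_norm_mul_gaussianKernel_le_of_finrank_eq_three (hE : finrank ℝ E = 3)
    (hε : 0 < ε) : ∫ x : E, ‖x‖ * gaussianKernel ε x ≤ 7 / 4 * √ε := by
  have : Nontrivial E := nontrivial_of_finrank_pos (R := ℝ) (by omega)
  have hπ : 0 < √π := sqrt_pos.mpr pi_pos
  have hΓ : Gamma (3 / 2) = √π / 2 := by
    rw [show (3 / 2 : ℝ) = 1 / 2 + 1 by norm_num, Gamma_add_one (by norm_num), Gamma_one_half_eq]
    ring
  have hconst : 8 * √2 ≤ 7 * √π := by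
    nlinarith [sq_sqrt zero_le_two, sq_sqrt pi_pos.le, pi_gt_three, sqrt_nonneg 2]
  rw [integral_norm_mul_gaussianKernel hε, hE, sqrt_mul zero_le_two]
  norm_num [Gamma_two, hΓ]
  rw [div_mul_eq_mul_div, div_le_iff₀ hπ]
  nlinarith [mul_le_mul_of_nonneg_right hconst (sqrt_nonneg ε)]

theorem integral_abs_gaussianKernel_sub_le_of_finrank_eq_three (hE : finrank ℝ E = 3)
    (hε : 0 < ε) (v : E) :
    ∫ x, |gaussianKernel ε (x - v) - gaussianKernel ε x| ≤ 4 * (√ε)⁻¹ * ‖v‖ := by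
  have : Nontrivial E := nontrivial_of_finrank_pos (R := ℝ) (by omega)
  have hs : 0 < √ε := sqrt_pos.mpr hε
  rcases le_total ‖v‖ (√ε / 2) with hv | hv
  · have hM := integral_norm_mul_gaussianKernel_le_of_finrank_eq_three hE hε
    calc ∫ x, |gaussianKernel ε (x - v) - gaussianKernel ε x|
        ≤ ‖v‖ * (2 * (∫ x : E, ‖x‖ * gaussianKernel ε x) + ‖v‖) / ε :=
          integral_abs_gaussianKernel_sub_le hε v
      _ ≤ ‖v‖ * (4 * √ε) / ε := by gcongr; linarith
      _ = 4 * (√ε)⁻¹ * ‖v‖ := by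
          field_simp
          rw [sq_sqrt hε.le]
  · calc ∫ x, |gaussianKernel ε (x - v) - gaussianKernel ε x|
        ≤ 2 := integral_abs_comp_sub_sub_le_two (integrable_gaussianKernel hε)
          (gaussianKernel_nonneg hε) (integral_gaussianKernel hε) v
      _ = 4 * (√ε)⁻¹ * (√ε / 2) := by field_simp; norm_num
      _ ≤ 4 * (√ε)⁻¹ * ‖v‖ := by gcongr

end GaussianKernel

theorem stmt_14_general (ε : ℝ) (hε : 0 < ε)
    (K : EuclideanSpace ℝ (Fin 3) → ℝ)
    (hK : ∀ x, K x = (2 * π * ε) ^ (-(3 : ℝ) / 2) * Real.exp (-‖x‖ ^ 2 / (2 * ε)))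
    (P : ℕ)
    (ahat atil : Fin P → ℝ) (hatil : ∀ p, 0 ≤ atil p)
    (Xhat Xtil : Fin P → EuclideanSpace ℝ (Fin 3)) :
    (∫ x, |∑ p, (ahat p * K (x - Xhat p) - atil p * K (x - Xtil p))|) ≤
      (∑ p, |ahat p - atil p|) +
        4 * max (ε ^ (-(1 : ℝ) / 2)) 1 * ∑ p, atil p * ‖Xhat p - Xtil p‖ := by
  have hdim : finrank ℝ (EuclideanSpace ℝ (Fin 3)) = 3 := finrank_euclideanSpace_fin
  obtain rfl : K = gaussianKernel ε := funext fun x => by rw [hK, gaussianKernel, hdim]; norm_num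
  have hL : 4 * (√ε)⁻¹ ≤ 4 * max (ε ^ (-(1 : ℝ) / 2)) 1 := by
    rw [sqrt_eq_rpow, ← rpow_neg hε.le, neg_div]
    gcongr
    exact le_max_left _ _
  refine (integral_abs_sum_mul_comp_sub_sub_le Finset.univ (integrable_gaussianKernel hε)
    (gaussianKernel_nonneg hε) (integral_gaussianKernel hε)
    (integral_abs_gaussianKernel_sub_le_of_finrank_eq_three hdim hε) ahat atil hatil
    Xhat Xtil).trans ?_
  gcongr
  exact Finset.sum_nonneg fun p _ => mul_nonneg (hatil p) (norm_nonneg _)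

/-- Mollified empirical-measure difference bound (proof of Lemma 3.4): the L¹-norm
of the difference of two weighted Gaussian mixtures is at most the weight error `h`
plus `4·max(ε^{-1/2},1)` times the weighted position error `d`. -/
theorem stmt_14 (ε : ℝ) (hε : 0 < ε)
    (K : EuclideanSpace ℝ (Fin 3) → ℝ)
    (hK : ∀ x, K x = (2 * π * ε) ^ (-(3 : ℝ) / 2) * Real.exp (-‖x‖ ^ 2 / (2 * ε)))
    (P : ℕ) (hP : 0 < P)
    (ahat atil : Fin P → ℝ) (hahat : ∀ p, 0 ≤ ahat p) (hatil : ∀ p, 0 ≤ atil p)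
    (Xhat Xtil : Fin P → EuclideanSpace ℝ (Fin 3)) :
    (∫ x, |∑ p, (ahat p * K (x - Xhat p) - atil p * K (x - Xtil p))|) ≤
      (∑ p, |ahat p - atil p|) +
        4 * max (ε ^ (-(1 : ℝ) / 2)) 1 * ∑ p, atil p * ‖Xhat p - Xtil p‖ :=
  stmt_14_general ε hε K hK P ahat atil hatil Xhat Xtil
end
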